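/- arXiv:2311.15910 — 2 statements merged into one kernel-verified Lean document; each statement's English description precedes it below -/
import Mathlib

section
/- Let K be a field, E a graph, v, w ∈ E^0, and e_1, …, e_n distinct edges with s(e_i) = v, r(e_i) = w, and assume |s^{-1}(v)| = n (so s^{-1}(v) = {e_1, …, e_n}). Let End_{v,w}(L_K(E)) denote the set of all K-algebra endomorphisms λ of L_K(E) with λ(u) = u, λ(e) = e and λ(e*) = e* for all u ∈ E^0 and all e ∈ E^1 \ {e_1, …, e_n}; it is a monoid under composition. Then the map Φ : (GL_n(wL_K(E)w), ⋆) → End_{v,w}(L_K(E)), P ↦ φ_P, is a monoid isomorphism, where P ⋆ Q := P φ_P(Q). Moreover, every λ ∈ End_{v,w}(L_K(E)) equals φ_P for the unique matrix P = (p_{ij}) ∈ GL_n(wL_K(E)w) given by p_{ij} = e_i* λ(e_j). -/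
/-!
The Cuntz–Krieger relation `v = Σ_k e_k e_k*` at `v` and the relations `e_i* e_j = δ_{ij} w`
say that the row `(e_1, …, e_n)` and the column `(e_1*, …, e_n*)` are inverse to each other up
to the idempotents `v` and `w`. So an endomorphism `λ` fixing the vertices satisfies
`λ(e_j) = v λ(e_j) = Σ_k e_k (e_k* λ(e_j))`, and the matrices `P = (e_i* λ(e_j))` and
`P' = (λ(e_i*) e_j)` are mutually inverse in `M_n(w L_K(E) w)`, because
`Σ_k λ(e_k) λ(e_k*) = λ(v) = v`. The same relations show that `φ` determines `P`, and
`φ_P (φ_Q (e_i)) = Σ_k φ_P(e_k) φ_P(q_{ki})` is exactly the formula for `P ⋆ Q = P φ_P(Q)`.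
-/

/-- A directed graph `E = (E⁰, E¹, s, r)`. -/
structure DirGraph : Type 1 where
  V : Type
  E : Type
  s : E → V
  r : E → V

/-- Generators of the Leavitt path algebra: vertices, edges and ghost edges. -/
inductive LGen (G : DirGraph) : Type
  | vertex : G.V → LGen G
  | edge : G.E → LGen G
  | ghost : G.E → LGen G

/-- The defining relations of the Leavitt path algebra. -/
inductive LRel (K : Type) [Field K] (G : DirGraph) :
    FreeAlgebra K (LGen G) → FreeAlgebra K (LGen G) → Prop
  | vertexIdem (u : G.V) :
      LRel K G (FreeAlgebra.ι K (LGen.vertex u) * FreeAlgebra.ι K (LGen.vertex u))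
        (FreeAlgebra.ι K (LGen.vertex u))
  | vertexOrth (u u' : G.V) (h : u ≠ u') :
      LRel K G (FreeAlgebra.ι K (LGen.vertex u) * FreeAlgebra.ι K (LGen.vertex u')) 0
  | sourceEdge (e : G.E) :
      LRel K G (FreeAlgebra.ι K (LGen.vertex (G.s e)) * FreeAlgebra.ι K (LGen.edge e))
        (FreeAlgebra.ι K (LGen.edge e))
  | edgeRange (e : G.E) :
      LRel K G (FreeAlgebra.ι K (LGen.edge e) * FreeAlgebra.ι K (LGen.vertex (G.r e)))
        (FreeAlgebra.ι K (LGen.edge e))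
  | ghostSource (e : G.E) :
      LRel K G (FreeAlgebra.ι K (LGen.ghost e) * FreeAlgebra.ι K (LGen.vertex (G.s e)))
        (FreeAlgebra.ι K (LGen.ghost e))
  | rangeGhost (e : G.E) :
      LRel K G (FreeAlgebra.ι K (LGen.vertex (G.r e)) * FreeAlgebra.ι K (LGen.ghost e))
        (FreeAlgebra.ι K (LGen.ghost e))
  | ghostEdgeSame (e : G.E) :
      LRel K G (FreeAlgebra.ι K (LGen.ghost e) * FreeAlgebra.ι K (LGen.edge e))
        (FreeAlgebra.ι K (LGen.vertex (G.r e)))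
  | ghostEdgeNe (e f : G.E) (h : e ≠ f) :
      LRel K G (FreeAlgebra.ι K (LGen.ghost e) * FreeAlgebra.ι K (LGen.edge f)) 0
  | ck2 (u : G.V) (hfin : {e : G.E | G.s e = u}.Finite) (hne : {e : G.E | G.s e = u}.Nonempty) :
      LRel K G (FreeAlgebra.ι K (LGen.vertex u))
        (hfin.toFinset.sum fun e =>
          FreeAlgebra.ι K (LGen.edge e) * FreeAlgebra.ι K (LGen.ghost e))

/-- The Leavitt path algebra `L_K(E)` of a graph. -/
abbrev LPA (K : Type) [Field K] (G : DirGraph) : Type := RingQuot (LRel K G)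

noncomputable def vertexEl (K : Type) [Field K] (G : DirGraph) (u : G.V) : LPA K G :=
  RingQuot.mkAlgHom K (LRel K G) (FreeAlgebra.ι K (LGen.vertex u))

noncomputable def edgeEl (K : Type) [Field K] (G : DirGraph) (e : G.E) : LPA K G :=
  RingQuot.mkAlgHom K (LRel K G) (FreeAlgebra.ι K (LGen.edge e))

noncomputable def ghostEl (K : Type) [Field K] (G : DirGraph) (e : G.E) : LPA K G :=
  RingQuot.mkAlgHom K (LRel K G) (FreeAlgebra.ι K (LGen.ghost e))

/-- A list of edges is a (finite) path when ranges and sources match up. -/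
def IsPath (G : DirGraph) (l : List G.E) : Prop :=
  l.Chain' fun e f => G.r e = G.s f

noncomputable def edgeProd (K : Type) [Field K] (G : DirGraph) (l : List G.E) : LPA K G :=
  (l.map (edgeEl K G)).prod

/-- For a path `q`, the element `q* = e_k* ⋯ e_1*`. -/
noncomputable def ghostProd (K : Type) [Field K] (G : DirGraph) (l : List G.E) : LPA K G :=
  (l.reverse.map (ghostEl K G)).prod

/-- The degree `d` component of the ℤ-grading of `L_K(E)`:
the `K`-span of the elements `p q*` with `r(p) = r(q)` and `|p| - |q| = d`. -/
noncomputable def lpaComponent (K : Type) [Field K] (G : DirGraph) (d : ℤ) :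
    Submodule K (LPA K G) :=
  Submodule.span K {x : LPA K G | ∃ p q : List G.E, ∃ u : G.V,
    IsPath G p ∧ IsPath G q ∧ (p.length : ℤ) - (q.length : ℤ) = d ∧
    x = edgeProd K G p * vertexEl K G u * ghostProd K G q}

/-- Membership in the corner `w L_K(E) w`. -/
def InCorner (K : Type) [Field K] (G : DirGraph) (w : G.V) (x : LPA K G) : Prop :=
  vertexEl K G w * x * vertexEl K G w = x

/-- `(P, P')` is a pair consisting of an element of `GL_n(w L_K(E) w)` and its inverse:
all entries lie in the corner `w L_K(E) w`, and `P P' = P' P = w·I_n`,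
the identity matrix of `M_n(w L_K(E) w)`. -/
def IsCornerGLPair (K : Type) [Field K] (G : DirGraph) (w : G.V) {n : ℕ}
    (P P' : Matrix (Fin n) (Fin n) (LPA K G)) : Prop :=
  (∀ i j, InCorner K G w (P i j)) ∧ (∀ i j, InCorner K G w (P' i j)) ∧
    P * P' = Matrix.diagonal (fun _ => vertexEl K G w) ∧
    P' * P = Matrix.diagonal (fun _ => vertexEl K G w)

/-- The defining property of the endomorphism `φ_P` of `L_K(E)` attached to a matrix
`P` (with inverse `P'`) over the corner `w L_K(E) w`:  it fixes all vertices, fixes all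
edges and ghost edges other than `e_1, …, e_n`, and sends
`e_i ↦ Σ_k e_k p_{k i}` and `e_i* ↦ Σ_k p'_{i k} e_k*`. -/
def PhiProps (K : Type) [Field K] (G : DirGraph) {n : ℕ} (es : Fin n → G.E)
    (P P' : Matrix (Fin n) (Fin n) (LPA K G)) (φ : LPA K G →ₐ[K] LPA K G) : Prop :=
  (∀ u : G.V, φ (vertexEl K G u) = vertexEl K G u) ∧
  (∀ e : G.E, e ∉ Set.range es → φ (edgeEl K G e) = edgeEl K G e) ∧
  (∀ e : G.E, e ∉ Set.range es → φ (ghostEl K G e) = ghostEl K G e) ∧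
  (∀ i, φ (edgeEl K G (es i)) = ∑ k, edgeEl K G (es k) * P k i) ∧
  (∀ i, φ (ghostEl K G (es i)) = ∑ k, P' i k * ghostEl K G (es k))

/-- `p'` is the inverse of `p` in the corner `d M d`, whose identity is `d`. -/
def IsCornerUnitPair {M : Type*} [Monoid M] (d p p' : M) : Prop :=
  d * p * d = p ∧ d * p' * d = p' ∧ p * p' = d ∧ p' * p = d

section CornerUnitPair

variable {M N : Type*} [Monoid M] [Monoid N] {d x p p' q q' : M}

theorem IsIdempotentElem.mul_eq_of_mul_mul_eq (hd : IsIdempotentElem d) (hx : d * x * d = x) :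
    d * x = x := by
  rw [← hx, ← mul_assoc, ← mul_assoc, hd.eq]

theorem IsIdempotentElem.mul_eq_of_mul_mul_eq' (hd : IsIdempotentElem d) (hx : d * x * d = x) :
    x * d = x := by
  rw [← hx, mul_assoc, hd.eq]

theorem IsCornerUnitPair.mul (hd : IsIdempotentElem d) (hp : IsCornerUnitPair d p p')
    (hq : IsCornerUnitPair d q q') : IsCornerUnitPair d (p * q) (q' * p') := by
  obtain ⟨hpd, hp'd, hpp', hp'p⟩ := hp
  obtain ⟨hqd, hq'd, hqq', hq'q⟩ := hq
  refine ⟨?_, ?_, ?_, ?_⟩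
  · calc d * (p * q) * d = (d * p) * (q * d) := by simp only [mul_assoc]
      _ = p * q := by rw [hd.mul_eq_of_mul_mul_eq hpd, hd.mul_eq_of_mul_mul_eq' hqd]
  · calc d * (q' * p') * d = (d * q') * (p' * d) := by simp only [mul_assoc]
      _ = q' * p' := by rw [hd.mul_eq_of_mul_mul_eq hq'd, hd.mul_eq_of_mul_mul_eq' hp'd]
  · calc p * q * (q' * p') = p * (q * q') * p' := by simp only [mul_assoc]
      _ = d := by rw [hqq', hd.mul_eq_of_mul_mul_eq' hpd, hpp']
  · calc q' * p' * (p * q) = q' * (p' * p) * q := by simp only [mul_assoc]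
      _ = d := by rw [hp'p, hd.mul_eq_of_mul_mul_eq' hq'd, hq'q]

theorem IsCornerUnitPair.map {F : Type*} [FunLike F M N] [MonoidHomClass F M N] (f : F)
    (hp : IsCornerUnitPair d p p') : IsCornerUnitPair (f d) (f p) (f p') := by
  obtain ⟨hpd, hp'd, hpp', hp'p⟩ := hp
  simp only [IsCornerUnitPair, ← map_mul, hpd, hp'd, hpp', hp'p, and_self]

end CornerUnitPair

section Relations

variable (K : Type) [Field K] (G : DirGraph)

theorem isIdempotentElem_vertexEl (u : G.V) : IsIdempotentElem (vertexEl K G u) :=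
  (map_mul _ _ _).symm.trans (RingQuot.mkAlgHom_rel K (LRel.vertexIdem u))

theorem vertexEl_source_mul_edgeEl (e : G.E) :
    vertexEl K G (G.s e) * edgeEl K G e = edgeEl K G e :=
  (map_mul _ _ _).symm.trans (RingQuot.mkAlgHom_rel K (LRel.sourceEdge e))

theorem edgeEl_mul_vertexEl_range (e : G.E) :
    edgeEl K G e * vertexEl K G (G.r e) = edgeEl K G e :=
  (map_mul _ _ _).symm.trans (RingQuot.mkAlgHom_rel K (LRel.edgeRange e))

theorem ghostEl_mul_vertexEl_source (e : G.E) :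
    ghostEl K G e * vertexEl K G (G.s e) = ghostEl K G e :=
  (map_mul _ _ _).symm.trans (RingQuot.mkAlgHom_rel K (LRel.ghostSource e))

theorem vertexEl_range_mul_ghostEl (e : G.E) :
    vertexEl K G (G.r e) * ghostEl K G e = ghostEl K G e :=
  (map_mul _ _ _).symm.trans (RingQuot.mkAlgHom_rel K (LRel.rangeGhost e))

theorem ghostEl_mul_edgeEl_self (e : G.E) :
    ghostEl K G e * edgeEl K G e = vertexEl K G (G.r e) :=
  (map_mul _ _ _).symm.trans (RingQuot.mkAlgHom_rel K (LRel.ghostEdgeSame e))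

theorem ghostEl_mul_edgeEl_of_ne {e f : G.E} (h : e ≠ f) :
    ghostEl K G e * edgeEl K G f = 0 :=
  ((map_mul _ _ _).symm.trans (RingQuot.mkAlgHom_rel K (LRel.ghostEdgeNe e f h))).trans
    (map_zero _)

theorem vertexEl_eq_sum_edgeEl_mul_ghostEl (u : G.V) (hfin : {e : G.E | G.s e = u}.Finite)
    (hne : {e : G.E | G.s e = u}.Nonempty) :
    vertexEl K G u = ∑ e ∈ hfin.toFinset, edgeEl K G e * ghostEl K G e :=
  (RingQuot.mkAlgHom_rel K (LRel.ck2 u hfin hne)).trans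
    ((map_sum _ _ _).trans (Finset.sum_congr rfl fun _ _ => map_mul _ _ _))

end Relations

section Corner

variable {K : Type} [Field K] {G : DirGraph} {n : ℕ} {w : G.V}
  {P P' Q Q' : Matrix (Fin n) (Fin n) (LPA K G)}

theorem InCorner.vertexEl_mul {x : LPA K G} (hx : InCorner K G w x) : vertexEl K G w * x = x :=
  (isIdempotentElem_vertexEl K G w).mul_eq_of_mul_mul_eq hx

theorem isIdempotentElem_diagonal_vertexEl :
    IsIdempotentElem (Matrix.diagonal fun _ : Fin n => vertexEl K G w) := by
  rw [IsIdempotentElem, Matrix.diagonal_mul_diagonal, (isIdempotentElem_vertexEl K G w).eq]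

theorem isCornerGLPair_iff : IsCornerGLPair K G w P P' ↔
    IsCornerUnitPair (Matrix.diagonal fun _ => vertexEl K G w) P P' := by
  have hcorner (M : Matrix (Fin n) (Fin n) (LPA K G)) : (∀ i j, InCorner K G w (M i j)) ↔
      (Matrix.diagonal fun _ => vertexEl K G w) * M * (Matrix.diagonal fun _ => vertexEl K G w) =
        M := by
    rw [← Matrix.ext_iff]
    simp only [Matrix.mul_diagonal, Matrix.diagonal_mul, InCorner]
  rw [IsCornerGLPair, IsCornerUnitPair, hcorner, hcorner]

theorem IsCornerGLPair.mul (hP : IsCornerGLPair K G w P P') (hQ : IsCornerGLPair K G w Q Q') :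
    IsCornerGLPair K G w (P * Q) (Q' * P') := by
  rw [isCornerGLPair_iff] at *
  exact hP.mul isIdempotentElem_diagonal_vertexEl hQ

theorem IsCornerGLPair.map (hQ : IsCornerGLPair K G w Q Q') {φ : LPA K G →ₐ[K] LPA K G}
    (hφ : φ (vertexEl K G w) = vertexEl K G w) :
    IsCornerGLPair K G w (Q.map φ) (Q'.map φ) := by
  rw [isCornerGLPair_iff] at *
  simpa only [AlgHom.mapMatrix_apply, Matrix.diagonal_map (map_zero φ), hφ] using
    hQ.map φ.mapMatrix

end Corner

section Edges

variable {K : Type} [Field K] {G : DirGraph} {n : ℕ} {v w : G.V} {es : Fin n → G.E}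

theorem vertexEl_eq_sum_of_source_eq (hn : 0 < n) (hes : Function.Injective es)
    (hs : ∀ i, G.s (es i) = v) (hfull : ∀ e : G.E, G.s e = v → e ∈ Set.range es) :
    vertexEl K G v = ∑ i, edgeEl K G (es i) * ghostEl K G (es i) := by
  classical
  have hset : {e : G.E | G.s e = v} = Set.range es :=
    Set.Subset.antisymm hfull (Set.range_subset_iff.2 hs)
  have hfin : {e : G.E | G.s e = v}.Finite := hset ▸ Set.finite_range es
  have htoFinset : hfin.toFinset = Finset.univ.image es := by
    ext e
    simp [hset]
  rw [vertexEl_eq_sum_edgeEl_mul_ghostEl K G v hfin ⟨es ⟨0, hn⟩, hs _⟩, htoFinset,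
    Finset.sum_image fun _ _ _ _ h => hes h]

theorem ghostEl_mul_edgeEl_eq_ite (hes : Function.Injective es) (hr : ∀ i, G.r (es i) = w)
    (i j : Fin n) :
    ghostEl K G (es i) * edgeEl K G (es j) = if i = j then vertexEl K G w else 0 := by
  split_ifs with h
  · rw [h, ghostEl_mul_edgeEl_self, hr]
  · exact ghostEl_mul_edgeEl_of_ne K G (hes.ne h)

theorem PhiProps.eq_of_ghostEl_mul (hes : Function.Injective es) (hr : ∀ i, G.r (es i) = w)
    {P P' : Matrix (Fin n) (Fin n) (LPA K G)} (hP : ∀ i j, InCorner K G w (P i j))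
    {φ : LPA K G →ₐ[K] LPA K G} (hφ : PhiProps K G es P P' φ) :
    P = Matrix.of fun i j => ghostEl K G (es i) * φ (edgeEl K G (es j)) := by
  ext i j
  simp only [Matrix.of_apply, hφ.2.2.2.1 j, Finset.mul_sum, ← mul_assoc,
    ghostEl_mul_edgeEl_eq_ite hes hr, ite_mul, zero_mul, Finset.sum_ite_eq, Finset.mem_univ,
    if_true, (hP i j).vertexEl_mul]

theorem PhiProps.comp {P P' Q Q' : Matrix (Fin n) (Fin n) (LPA K G)}
    {φ ψ : LPA K G →ₐ[K] LPA K G} (hφ : PhiProps K G es P P' φ) (hψ : PhiProps K G es Q Q' ψ) :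
    PhiProps K G es (P * Q.map φ) (Q'.map φ * P') (φ.comp ψ) := by
  obtain ⟨hφv, hφe, hφg, hφei, hφgi⟩ := hφ
  obtain ⟨hψv, hψe, hψg, hψei, hψgi⟩ := hψ
  refine ⟨fun u => ?_, fun e he => ?_, fun e he => ?_, fun i => ?_, fun i => ?_⟩
  · rw [AlgHom.comp_apply, hψv, hφv]
  · rw [AlgHom.comp_apply, hψe e he, hφe e he]
  · rw [AlgHom.comp_apply, hψg e he, hφg e he]
  · simp only [AlgHom.comp_apply, hψei, map_sum, map_mul, hφei, Finset.sum_mul, mul_assoc,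
      Matrix.mul_apply, Matrix.map_apply, Finset.mul_sum]
    exact Finset.sum_comm
  · simp only [AlgHom.comp_apply, hψgi, map_sum, map_mul, hφgi, Finset.mul_sum, ← mul_assoc,
      Matrix.mul_apply, Matrix.map_apply, Finset.sum_mul]
    exact Finset.sum_comm

theorem exists_isCornerGLPair_phiProps (hn : 0 < n) (hes : Function.Injective es)
    (hs : ∀ i, G.s (es i) = v) (hr : ∀ i, G.r (es i) = w)
    (hfull : ∀ e : G.E, G.s e = v → e ∈ Set.range es) (lam : LPA K G →ₐ[K] LPA K G)
    (hlam : ∀ u : G.V, lam (vertexEl K G u) = vertexEl K G u)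
    (hlamE : ∀ e : G.E, e ∉ Set.range es → lam (edgeEl K G e) = edgeEl K G e)
    (hlamG : ∀ e : G.E, e ∉ Set.range es → lam (ghostEl K G e) = ghostEl K G e) :
    ∃ P' : Matrix (Fin n) (Fin n) (LPA K G),
      IsCornerGLPair K G w
        (Matrix.of fun i j => ghostEl K G (es i) * lam (edgeEl K G (es j))) P' ∧
      PhiProps K G es
        (Matrix.of fun i j => ghostEl K G (es i) * lam (edgeEl K G (es j))) P' lam := by
  set V := vertexEl K G v
  set W := vertexEl K G w
  set ed : Fin n → LPA K G := fun i => edgeEl K G (es i)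
  set gh : Fin n → LPA K G := fun i => ghostEl K G (es i)
  have hV : lam V = V := hlam v
  have hW : lam W = W := hlam w
  have hVe (i : Fin n) : V * ed i = ed i := by
    simpa only [hs i] using vertexEl_source_mul_edgeEl K G (es i)
  have heW (i : Fin n) : ed i * W = ed i := by
    simpa only [hr i] using edgeEl_mul_vertexEl_range K G (es i)
  have hgV (i : Fin n) : gh i * V = gh i := by
    simpa only [hs i] using ghostEl_mul_vertexEl_source K G (es i)
  have hWg (i : Fin n) : W * gh i = gh i := by
    simpa only [hr i] using vertexEl_range_mul_ghostEl K G (es i)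
  have hge (i j : Fin n) : gh i * ed j = if i = j then W else 0 :=
    ghostEl_mul_edgeEl_eq_ite hes hr i j
  have hck : V = ∑ k, ed k * gh k := vertexEl_eq_sum_of_source_eq hn hes hs hfull
  -- the Cuntz–Krieger relation at `v`, transported along any algebra endomorphism `f`
  have hsum (f : LPA K G →ₐ[K] LPA K G) (x y : LPA K G) :
      ∑ k, x * f (ed k) * (f (gh k) * y) = x * f V * y := by
    rw [hck, map_sum, Finset.mul_sum, Finset.sum_mul]
    simp only [map_mul, mul_assoc]
  have hVlam (i : Fin n) : V * lam (ed i) = lam (ed i) := by rw [← hV, ← map_mul, hVe]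
  have hlamW (i : Fin n) : lam (ed i) * W = lam (ed i) := by rw [← hW, ← map_mul, heW]
  have hlamV (i : Fin n) : lam (gh i) * V = lam (gh i) := by rw [← hV, ← map_mul, hgV]
  have hWlam (i : Fin n) : W * lam (gh i) = lam (gh i) := by rw [← hW, ← map_mul, hWg]
  refine ⟨Matrix.of fun i j => lam (gh i) * ed j,
    ⟨fun i j => ?_, fun i j => ?_, ?_, ?_⟩, hlam, hlamE, hlamG, fun i => ?_, fun i => ?_⟩
  · change W * (gh i * lam (ed j)) * W = gh i * lam (ed j)
    rw [← mul_assoc, hWg, mul_assoc, hlamW]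
  · change W * (lam (gh i) * ed j) * W = lam (gh i) * ed j
    rw [← mul_assoc, hWlam, mul_assoc, heW]
  · ext i j
    rw [Matrix.mul_apply, Matrix.diagonal_apply]
    simp only [Matrix.of_apply]
    rw [hsum lam, hV, hgV, hge]
  · ext i j
    rw [Matrix.mul_apply, Matrix.diagonal_apply]
    simpa only [Matrix.of_apply, AlgHom.id_apply, hlamV, ← map_mul, hge, apply_ite lam, hW,
      map_zero] using hsum (AlgHom.id K _) (lam (gh i)) (lam (ed j))
  · simpa only [Matrix.of_apply, AlgHom.id_apply, one_mul, hVlam, eq_comm] using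
      hsum (AlgHom.id K _) 1 (lam (ed i))
  · simpa only [Matrix.of_apply, AlgHom.id_apply, mul_one, hlamV, mul_assoc, eq_comm] using
      hsum (AlgHom.id K _) (lam (gh i)) 1

end Edges

/-- Assume `|s^{-1}(v)| = n`.  Then `P ↦ φ_P` is a monoid isomorphism
from `(GL_n(w L_K(E) w), ⋆)`, `P ⋆ Q = P φ_P(Q)`, onto the monoid `End_{v,w}(L_K(E))`
of endomorphisms fixing all vertices and all edges and ghost edges other than
`e_1, …, e_n`: every such `λ` equals `φ_P` for the unique matrix `P = (e_i* λ(e_j))`,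
distinct matrices give distinct endomorphisms, and composition corresponds to `⋆`. -/
theorem stmt4 (K : Type) [Field K] (G : DirGraph) (n : ℕ) (hn : 0 < n)
    (v w : G.V) (es : Fin n → G.E) (hes : Function.Injective es)
    (hs : ∀ i, G.s (es i) = v) (hr : ∀ i, G.r (es i) = w)
    (hfull : ∀ e : G.E, G.s e = v → e ∈ Set.range es) :
    (∀ lam : LPA K G →ₐ[K] LPA K G,
      (∀ u : G.V, lam (vertexEl K G u) = vertexEl K G u) →
      (∀ e : G.E, e ∉ Set.range es → lam (edgeEl K G e) = edgeEl K G e) →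
      (∀ e : G.E, e ∉ Set.range es → lam (ghostEl K G e) = ghostEl K G e) →
      ∃ P' : Matrix (Fin n) (Fin n) (LPA K G),
        IsCornerGLPair K G w
          (Matrix.of fun i j => ghostEl K G (es i) * lam (edgeEl K G (es j))) P' ∧
        PhiProps K G es
          (Matrix.of fun i j => ghostEl K G (es i) * lam (edgeEl K G (es j))) P' lam) ∧
    (∀ P P' Q Q' : Matrix (Fin n) (Fin n) (LPA K G),
      IsCornerGLPair K G w P P' → IsCornerGLPair K G w Q Q' →
      ∀ φ ψ : LPA K G →ₐ[K] LPA K G,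
        PhiProps K G es P P' φ → PhiProps K G es Q Q' ψ → φ = ψ → P = Q) ∧
    (∀ P P' Q Q' : Matrix (Fin n) (Fin n) (LPA K G),
      IsCornerGLPair K G w P P' → IsCornerGLPair K G w Q Q' →
      ∀ φ ψ : LPA K G →ₐ[K] LPA K G,
        PhiProps K G es P P' φ → PhiProps K G es Q Q' ψ →
        IsCornerGLPair K G w (P * Q.map ⇑φ) (Q'.map ⇑φ * P') ∧
        PhiProps K G es (P * Q.map ⇑φ) (Q'.map ⇑φ * P') (φ.comp ψ)) :=
  ⟨exists_isCornerGLPair_phiProps hn hes hs hr hfull,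
    fun _ _ _ _ hP hQ _ _ hφ hψ hφψ => by
      rw [hφ.eq_of_ghostEl_mul hes hr hP.1, hψ.eq_of_ghostEl_mul hes hr hQ.1, hφψ],
    fun _ _ _ _ hP hQ _ _ hφ hψ => ⟨hP.mul (hQ.map (hφ.1 w)), hφ.comp hψ⟩⟩
end

section
/- Let n ≥ 2 be an integer, K a field, and R_n the rose graph with n petals. Then the map Φ : (A_{R_n}(e_1, e_2), +) → Aut(L_K(R_n)), p ↦ φ_{U_p}, is an injective group homomorphism from the additive group of A_{R_n}(e_1, e_2) into the automorphism group of L_K(R_n); moreover, its restriction to the additive group A_{R_n}(e_1, e_2) ∩ L_K(R_n)_0 is an injective group homomorphism into the group Aut^{gr}(L_K(R_n)) of graded automorphisms. -/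
/-- Generators of the Leavitt path algebra of the rose with `n` petals:
the edges `e_1, …, e_n` and the ghost edges `e_1*, …, e_n*` (the single vertex `v` is the
identity `1`). -/
inductive RGen (n : ℕ) : Type
  | e : Fin n → RGen n
  | g : Fin n → RGen n

/-- The defining relations of `L_K(R_n)`: `e_i* e_j = δ_{ij} v` and `Σ_i e_i e_i* = v`,
where `v = 1`. -/
inductive RoseRel (K : Type) [Field K] (n : ℕ) :
    FreeAlgebra K (RGen n) → FreeAlgebra K (RGen n) → Prop
  | ghostEdgeSame (i : Fin n) :
      RoseRel K n (FreeAlgebra.ι K (RGen.g i) * FreeAlgebra.ι K (RGen.e i)) 1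
  | ghostEdgeNe (i j : Fin n) (h : i ≠ j) :
      RoseRel K n (FreeAlgebra.ι K (RGen.g i) * FreeAlgebra.ι K (RGen.e j)) 0
  | ck2 :
      RoseRel K n (∑ i : Fin n, FreeAlgebra.ι K (RGen.e i) * FreeAlgebra.ι K (RGen.g i)) 1

/-- The Leavitt path algebra `L_K(R_n)` of the rose with `n` petals. -/
abbrev LRose (K : Type) [Field K] (n : ℕ) : Type := RingQuot (RoseRel K n)

/-- The edge `e_i` as an element of `L_K(R_n)`. -/
noncomputable def ee (K : Type) [Field K] (n : ℕ) (i : Fin n) : LRose K n :=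
  RingQuot.mkAlgHom K (RoseRel K n) (FreeAlgebra.ι K (RGen.e i))

/-- The ghost edge `e_i*` as an element of `L_K(R_n)`. -/
noncomputable def gg (K : Type) [Field K] (n : ℕ) (i : Fin n) : LRose K n :=
  RingQuot.mkAlgHom K (RoseRel K n) (FreeAlgebra.ι K (RGen.g i))

/-- The degree `d` component of the ℤ-grading of `L_K(R_n)`: the `K`-span of the
elements `p q*` with `|p| - |q| = d`. -/
noncomputable def rComponent (K : Type) [Field K] (n : ℕ) (d : ℤ) :
    Submodule K (LRose K n) :=
  Submodule.span K {x : LRose K n | ∃ p q : List (Fin n),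
    (p.length : ℤ) - (q.length : ℤ) = d ∧
    x = (p.map (ee K n)).prod * (q.reverse.map (gg K n)).prod}

/-- A map is graded when it preserves every homogeneous component. -/
def RGraded (K : Type) [Field K] (n : ℕ) (f : LRose K n → LRose K n) : Prop :=
  ∀ d : ℤ, ∀ x ∈ rComponent K n d, f x ∈ rComponent K n d

/-- The defining property of the endomorphism `φ_P` of `L_K(R_n)` attached to a matrix
`P` with inverse `P'`: it sends `e_i ↦ Σ_k e_k p_{k i}` and `e_i* ↦ Σ_k p'_{i k} e_k*`
(and `v = 1 ↦ 1` automatically). -/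
def RPhiProps (K : Type) [Field K] (n : ℕ) (P P' : Matrix (Fin n) (Fin n) (LRose K n))
    (φ : LRose K n →ₐ[K] LRose K n) : Prop :=
  (∀ i, φ (ee K n i) = ∑ k, ee K n k * P k i) ∧
  (∀ i, φ (gg K n i) = ∑ k, P' i k * gg K n k)

/-- The subalgebra `A_{R_n}(e_1, e_2)` of `L_K(R_n)`, generated by
`v (= 1), e_1, e_3, …, e_n, e_2*, …, e_n*` (with `0`-based indices: all `e_i` with
`i ≠ 1` and all `e_j*` with `j ≠ 0`). -/
noncomputable def roseA (K : Type) [Field K] (n : ℕ) : Subalgebra K (LRose K n) :=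
  Algebra.adjoin K
    {x : LRose K n | (∃ i : Fin n, (i : ℕ) ≠ 1 ∧ x = ee K n i) ∨
      (∃ j : Fin n, (j : ℕ) ≠ 0 ∧ x = gg K n j)}

/-!
The images `e_2 + e_1 p` and `e_1* - p e_2*`, together with the other generators, again satisfy
the Cuntz–Krieger relations for every `p` (the cross terms `± e_1 p e_2*` cancel in
`Σ e_i e_i*`), so the universal property of `L_K(R_n)` yields `φ_p`. Every `φ_q` fixes the
generators of `A(e_1, e_2)`, hence all of it, so `φ_p ∘ φ_q = φ_{p+q}` for `q ∈ A(e_1, e_2)`: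
thus `φ_{-p}` inverts `φ_p`, `p ↦ φ_p` is additive, and it is injective because
`p = e_1* φ_p(e_2)`. For `p` of degree `0`, `φ_p` sends each generator to a homogeneous element
of the same degree, so it preserves every component because `L_d L_{d'} ⊆ L_{d+d'}`.
-/

namespace LRose

variable {K : Type} [Field K] {n : ℕ}

theorem gg_mul_ee (i j : Fin n) :
    gg K n i * ee K n j = if i = j then 1 else 0 := by
  rw [gg, ee, ← map_mul]
  split_ifs with h
  · subst h
    rw [RingQuot.mkAlgHom_rel K (RoseRel.ghostEdgeSame i), map_one]
  · rw [RingQuot.mkAlgHom_rel K (RoseRel.ghostEdgeNe i j h), map_zero]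

@[simp]
theorem gg_mul_ee_self (i : Fin n) : gg K n i * ee K n i = 1 := by
  simp [gg_mul_ee]

theorem gg_mul_ee_of_ne {i j : Fin n} (h : i ≠ j) : gg K n i * ee K n j = 0 := by
  simp [gg_mul_ee, h]

theorem gg_mul_ee_mul (i j : Fin n) (x : LRose K n) :
    gg K n i * (ee K n j * x) = if i = j then x else 0 := by
  rw [← mul_assoc, gg_mul_ee]
  split_ifs <;> simp

theorem sum_ee_mul_gg : ∑ i : Fin n, ee K n i * gg K n i = 1 := by
  simpa [ee, gg] using RingQuot.mkAlgHom_rel K (RoseRel.ck2 (K := K) (n := n))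

section Lift

variable {A : Type} [Semiring A] [Algebra K A]

noncomputable def lift (E G : Fin n → A) (hGE : ∀ i j, G i * E j = if i = j then 1 else 0)
    (hEG : ∑ i, E i * G i = 1) : LRose K n →ₐ[K] A :=
  RingQuot.liftAlgHom K ⟨FreeAlgebra.lift K fun | .e i => E i | .g i => G i, by
    intro x y h
    cases h with
    | ghostEdgeSame i => simp [hGE]
    | ghostEdgeNe i j h => simp [hGE, h]
    | ck2 => simpa using hEG⟩

variable {E G : Fin n → A} {hGE : ∀ i j, G i * E j = if i = j then 1 else 0}
  {hEG : ∑ i, E i * G i = 1}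

@[simp]
theorem lift_ee (i : Fin n) : lift (K := K) E G hGE hEG (ee K n i) = E i := by
  rw [lift, ee, RingQuot.liftAlgHom_mkAlgHom_apply, FreeAlgebra.lift_ι_apply]

@[simp]
theorem lift_gg (i : Fin n) : lift (K := K) E G hGE hEG (gg K n i) = G i := by
  rw [lift, gg, RingQuot.liftAlgHom_mkAlgHom_apply, FreeAlgebra.lift_ι_apply]

theorem algHom_ext {f g : LRose K n →ₐ[K] A} (he : ∀ i, f (ee K n i) = g (ee K n i))
    (hg : ∀ i, f (gg K n i) = g (gg K n i)) : f = g := by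
  refine RingQuot.ringQuot_ext' K f g (FreeAlgebra.hom_ext (funext fun x => ?_))
  cases x with
  | e i => exact he i
  | g i => exact hg i

end Lift

section Grading

theorem one_mem_rComponent_zero : (1 : LRose K n) ∈ rComponent K n 0 :=
  Submodule.subset_span ⟨[], [], by simp, by simp⟩

theorem ee_mem_rComponent_one (i : Fin n) : ee K n i ∈ rComponent K n 1 :=
  Submodule.subset_span ⟨[i], [], by simp, by simp⟩

theorem gg_mem_rComponent_neg_one (j : Fin n) : gg K n j ∈ rComponent K n (-1) :=
  Submodule.subset_span ⟨[], [j], by simp, by simp⟩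

/-- The ghost word `Q*` cancels against the front of the word `R`, by `e_i* e_j = δ_{ij}`. -/
theorem monomial_mul_monomial_mem_rComponent (P S Q R : List (Fin n)) :
    (P.map (ee K n)).prod * (Q.reverse.map (gg K n)).prod *
      ((R.map (ee K n)).prod * (S.reverse.map (gg K n)).prod) ∈
      rComponent K n (((P.length : ℤ) - Q.length) + ((R.length : ℤ) - S.length)) := by
  induction Q generalizing R with
  | nil =>
    refine Submodule.subset_span ⟨P ++ R, S,
      by push_cast [List.length_append, List.length_nil]; ring, ?_⟩
    simp [List.prod_append, mul_assoc]
  | cons a Q ih =>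
    cases R with
    | nil =>
      refine Submodule.subset_span ⟨P, S ++ a :: Q,
        by push_cast [List.length_append, List.length_cons, List.length_nil]; ring, ?_⟩
      simp [List.prod_append, mul_assoc]
    | cons b R =>
      have hdeg : ((P.length : ℤ) - (a :: Q).length) + (((b :: R).length : ℤ) - S.length) =
          ((P.length : ℤ) - Q.length) + ((R.length : ℤ) - S.length) := by
        push_cast [List.length_cons]; ring
      rw [hdeg]
      rcases eq_or_ne a b with rfl | hab
      · simpa [List.prod_append, mul_assoc, gg_mul_ee_mul] using ih R
      · simp [List.prod_append, mul_assoc, gg_mul_ee_mul, hab]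

theorem mul_mem_rComponent {d₁ d₂ : ℤ} {x y : LRose K n} (hx : x ∈ rComponent K n d₁)
    (hy : y ∈ rComponent K n d₂) : x * y ∈ rComponent K n (d₁ + d₂) := by
  suffices h : rComponent K n d₁ * rComponent K n d₂ ≤ rComponent K n (d₁ + d₂) from
    h (Submodule.mul_mem_mul hx hy)
  rw [rComponent, rComponent, Submodule.span_mul_span, Submodule.span_le]
  rintro _ ⟨_, ⟨P, Q, rfl, rfl⟩, _, ⟨R, S, rfl, rfl⟩, rfl⟩
  exact monomial_mul_monomial_mem_rComponent P S Q R

theorem list_prod_mem_rComponent {d : ℤ} {l : List (LRose K n)}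
    (h : ∀ x ∈ l, x ∈ rComponent K n d) : l.prod ∈ rComponent K n (l.length * d) := by
  induction l with
  | nil => simpa using one_mem_rComponent_zero
  | cons x l ih =>
    rw [List.prod_cons, List.length_cons, Nat.cast_succ, add_mul, one_mul, add_comm]
    exact mul_mem_rComponent (h x List.mem_cons_self)
      (ih fun y hy => h y (List.mem_cons_of_mem x hy))

theorem rGraded_of_forall_mem {f : LRose K n →ₐ[K] LRose K n}
    (he : ∀ i, f (ee K n i) ∈ rComponent K n 1) (hg : ∀ j, f (gg K n j) ∈ rComponent K n (-1)) :
    RGraded K n f := by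
  intro d x hx
  induction hx using Submodule.span_induction with
  | mem x hx =>
    obtain ⟨P, Q, rfl, rfl⟩ := hx
    rw [map_mul, map_list_prod, map_list_prod, List.map_map, List.map_map, sub_eq_add_neg]
    refine mul_mem_rComponent ?_ ?_
    · simpa using list_prod_mem_rComponent (d := 1) (l := P.map (f ∘ ee K n))
        (by simpa using fun i _ => he i)
    · simpa using list_prod_mem_rComponent (d := -1) (l := Q.reverse.map (f ∘ gg K n))
        (by simpa using fun j _ => hg j)
  | zero => simp
  | add x y _ _ hx hy => simpa using add_mem hx hy
  | smul c x _ hx => simpa using Submodule.smul_mem _ c hx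

end Grading

section Transvection

variable {a b : Fin n}

noncomputable abbrev transvectionEdge (a b : Fin n) (p : LRose K n) : Fin n → LRose K n :=
  Function.update (ee K n) b (ee K n b + ee K n a * p)

noncomputable abbrev transvectionGhost (a b : Fin n) (p : LRose K n) : Fin n → LRose K n :=
  Function.update (gg K n) a (gg K n a - p * gg K n b)

theorem transvectionGhost_mul_transvectionEdge (hab : a ≠ b) (p : LRose K n) (i j : Fin n) :
    transvectionGhost a b p i * transvectionEdge a b p j = if i = j then 1 else 0 := by
  rcases eq_or_ne i a with rfl | hia <;> rcases eq_or_ne j b with rfl | hjb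
  · simp [hab, gg_mul_ee_of_ne hab, gg_mul_ee_of_ne hab.symm, mul_add, sub_mul, ← mul_assoc,
      mul_assoc p]
  · simp [hjb, sub_mul, mul_assoc p, gg_mul_ee_of_ne (Ne.symm hjb), gg_mul_ee]
  · simp [hia, mul_add, ← mul_assoc, gg_mul_ee_of_ne hia, gg_mul_ee]
  · simp [hia, hjb, gg_mul_ee]

theorem transvectionEdge_mul_transvectionGhost (hab : a ≠ b) (p : LRose K n) (i : Fin n) :
    transvectionEdge a b p i * transvectionGhost a b p i = ee K n i * gg K n i +
      ((if i = b then ee K n a * p * gg K n b else 0) -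
        if i = a then ee K n a * p * gg K n b else 0) := by
  rcases eq_or_ne i a with rfl | hia
  · simp only [Function.update_self, Function.update_of_ne hab, if_neg hab, if_true]
    rw [mul_sub, mul_assoc, zero_sub, sub_eq_add_neg]
  rcases eq_or_ne i b with rfl | hib
  · simp [hia, add_mul]
  · simp [hia, hib]

theorem sum_transvectionEdge_mul_transvectionGhost (hab : a ≠ b) (p : LRose K n) :
    ∑ i, transvectionEdge a b p i * transvectionGhost a b p i = 1 := by
  simp only [transvectionEdge_mul_transvectionGhost hab, Finset.sum_add_distrib,
    Finset.sum_sub_distrib, Finset.sum_ite_eq', Finset.mem_univ, if_true, sub_self, add_zero,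
    sum_ee_mul_gg]

/-- `φ_{U_p}` for the elementary matrix with `p` in position `(a, b)`; the paper's case is
`(a, b) = (0, 1)` in `0`-based indices. -/
noncomputable def transvection (hab : a ≠ b) (p : LRose K n) : LRose K n →ₐ[K] LRose K n :=
  lift (transvectionEdge a b p) (transvectionGhost a b p)
    (transvectionGhost_mul_transvectionEdge hab p)
    (sum_transvectionEdge_mul_transvectionGhost hab p)

variable (hab : a ≠ b) (p : LRose K n)

theorem transvection_ee_of_ne {i : Fin n} (hi : i ≠ b) :
    transvection hab p (ee K n i) = ee K n i := by
  simp [transvection, hi]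

theorem transvection_ee_self : transvection hab p (ee K n b) = ee K n b + ee K n a * p := by
  simp [transvection]

theorem transvection_gg_of_ne {j : Fin n} (hj : j ≠ a) :
    transvection hab p (gg K n j) = gg K n j := by
  simp [transvection, hj]

theorem transvection_gg_self : transvection hab p (gg K n a) = gg K n a - p * gg K n b := by
  simp [transvection]

theorem transvection_zero : transvection hab (0 : LRose K n) = AlgHom.id K (LRose K n) :=
  algHom_ext (fun i => by simp [transvection, transvectionEdge])
    (fun i => by simp [transvection, transvectionGhost])

theorem transvection_comp_transvection {q : LRose K n} (hq : transvection hab p q = q) :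
    (transvection hab p).comp (transvection hab q) = transvection hab (p + q) := by
  refine algHom_ext (fun i => ?_) (fun j => ?_)
  · rcases eq_or_ne i b with rfl | hi
    · simp [transvection_ee_self, transvection_ee_of_ne hab _ hab, hq, mul_add, add_assoc]
    · simp [transvection_ee_of_ne _ _ hi]
  · rcases eq_or_ne j a with rfl | hj
    · simp [transvection_gg_self, transvection_gg_of_ne hab _ hab.symm, hq, add_mul, sub_sub]
    · simp [transvection_gg_of_ne _ _ hj]

theorem transvection_injective : Function.Injective (transvection (K := K) hab) := by
  intro p q h
  have hb := congrArg (gg K n a * ·) (congrArg (· (ee K n b)) h)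
  simpa [transvection_ee_self, mul_add, gg_mul_ee_of_ne hab, ← mul_assoc] using hb

theorem transvection_rGraded (hp : p ∈ rComponent K n 0) :
    RGraded K n (transvection hab p) := by
  refine rGraded_of_forall_mem (fun i => ?_) (fun j => ?_)
  · rcases eq_or_ne i b with rfl | hi
    · have hap := mul_mem_rComponent (ee_mem_rComponent_one a) hp
      rw [add_zero] at hap
      rw [transvection_ee_self]
      exact add_mem (ee_mem_rComponent_one i) hap
    · rw [transvection_ee_of_ne _ _ hi]
      exact ee_mem_rComponent_one i
  · rcases eq_or_ne j a with rfl | hj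
    · have hpb := mul_mem_rComponent hp (gg_mem_rComponent_neg_one b)
      rw [zero_add] at hpb
      rw [transvection_gg_self]
      exact sub_mem (gg_mem_rComponent_neg_one j) hpb
    · rw [transvection_gg_of_ne _ _ hj]
      exact gg_mem_rComponent_neg_one j

noncomputable def transvectionEquiv (hp : ∀ q, transvection hab q p = p) :
    LRose K n ≃ₐ[K] LRose K n :=
  AlgEquiv.ofAlgHom (transvection hab p) (transvection hab (-p))
    (by rw [transvection_comp_transvection _ _ (by rw [map_neg, hp]), add_neg_cancel,
      transvection_zero])
    (by rw [transvection_comp_transvection _ _ (hp _), neg_add_cancel, transvection_zero])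

end Transvection

section Rose

variable (hn : 2 ≤ n)

theorem fin_zero_ne_one : (⟨0, by linarith⟩ : Fin n) ≠ ⟨1, by linarith⟩ := by
  simp

theorem transvection_apply_of_mem_roseA (p : LRose K n) {x : LRose K n} (hx : x ∈ roseA K n) :
    transvection (fin_zero_ne_one hn) p x = x := by
  suffices h : roseA K n ≤ AlgHom.equalizer (transvection (fin_zero_ne_one hn) p) (AlgHom.id K _)
    from h hx
  refine Algebra.adjoin_le ?_
  rintro _ (⟨i, hi, rfl⟩ | ⟨j, hj, rfl⟩)
  · exact transvection_ee_of_ne _ _ (Fin.ne_of_val_ne hi)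
  · exact transvection_gg_of_ne _ _ (Fin.ne_of_val_ne hj)

noncomputable def roseTransvection (p : roseA K n) : LRose K n ≃ₐ[K] LRose K n :=
  transvectionEquiv (fin_zero_ne_one hn) p fun _ => transvection_apply_of_mem_roseA hn _ p.2

theorem roseTransvection_apply (p : roseA K n) (x : LRose K n) :
    roseTransvection hn p x = transvection (fin_zero_ne_one hn) p x := rfl

theorem roseTransvection_add (p q : roseA K n) :
    roseTransvection hn (p + q) = roseTransvection hn p * roseTransvection hn q := by
  ext x
  rw [AlgEquiv.mul_apply, roseTransvection_apply, roseTransvection_apply, roseTransvection_apply,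
    Subalgebra.coe_add, ← transvection_comp_transvection _ _
      (transvection_apply_of_mem_roseA hn _ q.2), AlgHom.comp_apply]

theorem roseTransvection_injective : Function.Injective (roseTransvection (K := K) hn) := by
  intro p q h
  exact Subtype.ext <| transvection_injective (fin_zero_ne_one hn) <|
    AlgHom.ext fun x => congrArg (· x) h

end Rose

end LRose

/-- The map `p ↦ φ_{U_p}` is an injective group homomorphism from
`(A_{R_n}(e_1, e_2), +)` into `Aut(L_K(R_n))`, whose restriction to
`A_{R_n}(e_1, e_2) ∩ L_K(R_n)_0` lands in `Aut^{gr}(L_K(R_n))`. -/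
theorem stmt8 (K : Type) [Field K] (n : ℕ) (hn : 2 ≤ n) :
    ∃ Φ : roseA K n → (LRose K n ≃ₐ[K] LRose K n),
      Function.Injective Φ ∧
      (∀ p q : roseA K n, Φ (p + q) = Φ p * Φ q) ∧
      (∀ p : roseA K n,
        (∀ i : Fin n, (i : ℕ) ≠ 1 → (Φ p) (ee K n i) = ee K n i) ∧
        (∀ j : Fin n, (j : ℕ) ≠ 0 → (Φ p) (gg K n j) = gg K n j) ∧
        ((Φ p) (ee K n ⟨1, by omega⟩) =
          ee K n ⟨1, by omega⟩ + ee K n ⟨0, by omega⟩ * (p : LRose K n)) ∧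
        ((Φ p) (gg K n ⟨0, by omega⟩) =
          gg K n ⟨0, by omega⟩ - (p : LRose K n) * gg K n ⟨1, by omega⟩)) ∧
      (∀ p : roseA K n, (p : LRose K n) ∈ rComponent K n 0 → RGraded K n ⇑(Φ p)) := by
  refine ⟨LRose.roseTransvection hn, LRose.roseTransvection_injective hn,
    LRose.roseTransvection_add hn, fun p => ⟨fun i hi => ?_, fun j hj => ?_, ?_, ?_⟩,
    fun p hp => LRose.transvection_rGraded _ _ hp⟩
  · exact LRose.transvection_ee_of_ne _ _ (Fin.ne_of_val_ne hi)
  · exact LRose.transvection_gg_of_ne _ _ (Fin.ne_of_val_ne hj)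
  · exact LRose.transvection_ee_self _ _
  · exact LRose.transvection_gg_self _ _
end
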